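/- arXiv:2004.05906 — 5 statements merged into one kernel-verified Lean document; each statement's English description precedes it below -/
import Mathlib

section
/- Let R be a commutative ring containing the rationals, equipped with a derivation ∂, and suppose R is ∂-simple, i.e., the only ideals I of R with ∂(I) ⊆ I are (0) and R. Then R is an integral domain. -/
/-!
The nilradical is a differential ideal (in a `ℚ`-algebra the derivative of a nilpotent element is
nilpotent), and it is not `⊤`, so a `∂`-simple ring is reduced. If `a * b = 0` with `b ≠ 0`, the
annihilator of `{∂ᵏ b | k}` is a proper differential ideal, hence `0`; but differentiating
`a * b = 0` repeatedly gives `a ^ (k + 1) * ∂ᵏ b = 0`, so each `a * ∂ᵏ b` is nilpotent, hence zero,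
and `a` lies in that annihilator.
-/

namespace Derivation

variable {A R : Type*} [CommSemiring A] [CommRing R] [Algebra A R] (D : Derivation A R R)

def IsSimple : Prop :=
  ∀ I : Ideal R, (∀ a ∈ I, D a ∈ I) → I = ⊥ ∨ I = ⊤

theorem map_pow_succ (a : R) (n : ℕ) : D (a ^ (n + 1)) = (n + 1) * a ^ n * D a := by
  rw [leibniz_pow, Nat.add_sub_cancel, smul_eq_mul, nsmul_eq_mul]
  push_cast
  ring

theorem mul_map_pow (a : R) (n : ℕ) : a * D (a ^ n) = n * a ^ n * D a := by
  cases n with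
  | zero => simp
  | succ n => rw [map_pow_succ]; push_cast; ring

theorem eq_zero_of_natCast_succ_mul_eq_zero [Algebra ℚ R] {n : ℕ} {y : R}
    (h : ((n : R) + 1) * y = 0) : y = 0 := by
  have hunit : IsUnit ((n : R) + 1) := by
    simpa using (Nat.cast_add_one_ne_zero n : ((n : ℚ) + 1) ≠ 0).isUnit.map (algebraMap ℚ R)
  exact hunit.mul_right_eq_zero.mp h

theorem pow_mul_map_pow_add_two_eq_zero [Algebra ℚ R] {x : R} {m j : ℕ}
    (h : x ^ (m + 1) * D x ^ j = 0) : x ^ m * D x ^ (j + 2) = 0 := by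
  have hD : x ^ (m + 1) * D (D x ^ j) + D x ^ j * D (x ^ (m + 1)) = 0 := by
    simpa only [leibniz, smul_eq_mul, map_zero] using congrArg D h
  apply eq_zero_of_natCast_succ_mul_eq_zero (n := m)
  linear_combination D x * hD - x ^ (m + 1) * mul_map_pow D (D x) j
    - D x ^ j * D x * map_pow_succ D x m - (j : R) * D (D x) * h

theorem isNilpotent_map [Algebra ℚ R] {x : R} (hx : IsNilpotent x) : IsNilpotent (D x) := by
  obtain ⟨n, hn⟩ := hx
  have key : ∀ m j : ℕ, x ^ m * D x ^ j = 0 → D x ^ (j + 2 * m) = 0 := by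
    intro m
    induction m with
    | zero => intro j hj; simpa using hj
    | succ m ih =>
      intro j hj
      simpa only [Nat.add_assoc, Nat.mul_succ, Nat.add_comm 2] using
        ih (j + 2) (pow_mul_map_pow_add_two_eq_zero D hj)
  exact ⟨0 + 2 * n, key n 0 (by rw [hn, zero_mul])⟩

theorem IsSimple.isReduced [Algebra ℚ R] [Nontrivial R] (hD : D.IsSimple) : IsReduced R := by
  have hdiff : ∀ a ∈ nilradical R, D a ∈ nilradical R := fun a ha =>
    mem_nilradical.mpr (D.isNilpotent_map (mem_nilradical.mp ha))
  rcases hD _ hdiff with hbot | htop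
  · exact nilradical_eq_bot_iff.mp hbot
  · exact absurd (mem_nilradical.mp (htop ▸ Submodule.mem_top)) not_isNilpotent_one

theorem pow_succ_mul_iterate_eq_zero {a b : R} (hab : a * b = 0) (k : ℕ) :
    a ^ (k + 1) * D^[k] b = 0 := by
  induction k with
  | zero => simpa using hab
  | succ k ih =>
    have hD : a ^ (k + 1) * D (D^[k] b) + D^[k] b * D (a ^ (k + 1)) = 0 := by
      simpa only [leibniz, smul_eq_mul, map_zero] using congrArg D ih
    rw [Function.iterate_succ_apply']
    linear_combination a * hD - a * D^[k] b * map_pow_succ D a k - (k + 1 : R) * D a * ih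

theorem map_mul_iterate_eq_zero {x b : R} (hx : ∀ k, x * D^[k] b = 0) (k : ℕ) :
    D x * D^[k] b = 0 := by
  have hD : x * D (D^[k] b) + D^[k] b * D x = 0 := by
    simpa only [leibniz, smul_eq_mul, map_zero] using congrArg D (hx k)
  have hsucc := hx (k + 1)
  rw [Function.iterate_succ_apply'] at hsucc
  linear_combination hD - hsucc

theorem IsSimple.noZeroDivisors [IsReduced R] (hD : D.IsSimple) : NoZeroDivisors R := by
  refine ⟨fun {a b} hab => or_iff_not_imp_right.mpr fun hb => ?_⟩
  set J : Ideal R := (Ideal.span (Set.range fun k => D^[k] b)).annihilator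
  have hmem : ∀ x, x ∈ J ↔ ∀ k, x * D^[k] b = 0 := by
    simp [J, Submodule.mem_annihilator_span]
  have haJ : a ∈ J := (hmem a).mpr fun k =>
    IsNilpotent.eq_zero ⟨k + 1, by
      linear_combination D^[k] b ^ k * pow_succ_mul_iterate_eq_zero D hab k⟩
  rcases hD J fun x hx => (hmem _).mpr (D.map_mul_iterate_eq_zero ((hmem x).mp hx)) with hbot | htop
  · exact (Submodule.mem_bot R).mp (hbot ▸ haJ)
  · exact absurd (by simpa using (hmem 1).mp (htop ▸ Submodule.mem_top) 0) hb

end Derivation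

/-- A nontrivial commutative ℚ-algebra with a derivation `D` that is `D`-simple
(its only differential ideals are `⊥` and `⊤`) is an integral domain. -/
theorem stmt_2 {R : Type*} [CommRing R] [Algebra ℚ R] [Nontrivial R]
    (D : Derivation ℚ R R)
    (hsimple : ∀ I : Ideal R, (∀ a ∈ I, D a ∈ I) → I = ⊥ ∨ I = ⊤) :
    IsDomain R := by
  have hD : D.IsSimple := hsimple
  have := hD.isReduced
  have := hD.noZeroDivisors
  exact NoZeroDivisors.to_isDomain R
end

section
/- Let R be a ∂-simple commutative ℚ-algebra with derivation ∂ (hence an integral domain), and let L = Frac(R) be its fraction field with the unique extension of ∂. Then the field of constants of L equals the field of constants of R, i.e., every element a/b ∈ L with ∂(a/b) = 0 already lies in R^∂. -/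
/-!
The elements `b : R` with `b * a ∈ R` form an ideal of `R`, nonzero because `a` has a
denominator. If `∂ a = 0`, the Leibniz rule `∂ (b * a) = ∂ b * a` shows that this ideal is
differential, so by `∂`-simplicity it contains `1`, i.e. `a ∈ R`; then `∂ a = 0` in `L`
gives `∂ a = 0` in `R` since `R → L` is injective.
-/

section DenominatorIdeal

variable (R : Type*) {L : Type*} [CommRing R] [CommRing L] [Algebra R L]

/-- The ideal of denominators of `a`: the `b : R` such that `b • a` lies in (the image of) `R`. -/
def denominatorIdeal (a : L) : Ideal R :=
  (LinearMap.range (Algebra.linearMap R L)).comap (LinearMap.toSpanSingleton R L a)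

variable {R}

theorem mem_denominatorIdeal {a : L} {b : R} :
    b ∈ denominatorIdeal R a ↔ ∃ c : R, algebraMap R L c = algebraMap R L b * a := by
  simp [denominatorIdeal, Algebra.smul_def]

theorem denominatorIdeal_eq_top_iff {a : L} :
    denominatorIdeal R a = ⊤ ↔ a ∈ Set.range (algebraMap R L) := by
  rw [Ideal.eq_top_iff_one, mem_denominatorIdeal, map_one, one_mul, Set.mem_range]

theorem denominatorIdeal_ne_bot {K : Type*} [Field K] [Algebra R K] [IsFractionRing R K]
    (a : K) : denominatorIdeal R a ≠ ⊥ := by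
  obtain ⟨⟨c, s⟩, hs⟩ := IsLocalization.surj (nonZeroDivisors R) a
  have hs_mem : (s : R) ∈ denominatorIdeal R a :=
    mem_denominatorIdeal.2 ⟨c, by rw [← hs, mul_comm]⟩
  have hs_ne : (s : R) ≠ 0 := fun h0 ↦
    (IsLocalization.map_units K s).ne_zero (by rw [h0, map_zero])
  exact fun hbot ↦ hs_ne ((Submodule.eq_bot_iff _).1 hbot _ hs_mem)

theorem derivation_mem_denominatorIdeal {A : Type*} [CommRing A] [Algebra A R] [Algebra A L]
    {D : Derivation A R R} {D' : Derivation A L L}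
    (hext : ∀ r : R, D' (algebraMap R L r) = algebraMap R L (D r))
    {a : L} (ha : D' a = 0) {b : R} (hb : b ∈ denominatorIdeal R a) :
    D b ∈ denominatorIdeal R a := by
  obtain ⟨c, hc⟩ := mem_denominatorIdeal.1 hb
  refine mem_denominatorIdeal.2 ⟨D c, ?_⟩
  have := congrArg D' hc
  rwa [Derivation.leibniz, ha, hext, hext, smul_zero, zero_add, smul_eq_mul, mul_comm] at this

end DenominatorIdeal

theorem stmt_4_general {R L : Type*} [CommRing R] [Algebra ℚ R]
    [Field L] [Algebra ℚ L] [Algebra R L] [IsFractionRing R L]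
    (D : Derivation ℚ R R)
    (hsimple : ∀ I : Ideal R, (∀ a ∈ I, D a ∈ I) → I = ⊥ ∨ I = ⊤)
    (D' : Derivation ℚ L L)
    (hext : ∀ r : R, D' (algebraMap R L r) = algebraMap R L (D r)) :
    ∀ a : L, D' a = 0 → ∃ r : R, D r = 0 ∧ algebraMap R L r = a := by
  intro a ha
  have htop : denominatorIdeal R a = ⊤ :=
    (hsimple _ fun _ ↦ derivation_mem_denominatorIdeal hext ha).resolve_left
      (denominatorIdeal_ne_bot a)
  obtain ⟨r, rfl⟩ := denominatorIdeal_eq_top_iff.1 htop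
  refine ⟨r, IsFractionRing.injective R L ?_, rfl⟩
  rw [← hext, ha, map_zero]

/-- Let `R` be a `∂`-simple commutative ℚ-algebra with derivation `D` (a domain), let `L`
be its fraction field, and let `D'` be a derivation on `L` extending `D`. Then every
constant of `L` is (the image of) a constant of `R`. -/
theorem stmt_4 {R L : Type*} [CommRing R] [Algebra ℚ R] [Nontrivial R] [IsDomain R]
    [Field L] [Algebra ℚ L] [Algebra R L] [IsFractionRing R L]
    (D : Derivation ℚ R R)
    (hsimple : ∀ I : Ideal R, (∀ a ∈ I, D a ∈ I) → I = ⊥ ∨ I = ⊤)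
    (D' : Derivation ℚ L L)
    (hext : ∀ r : R, D' (algebraMap R L r) = algebraMap R L (D r)) :
    ∀ a : L, D' a = 0 → ∃ r : R, D r = 0 ∧ algebraMap R L r = a :=
  stmt_4_general D hsimple D' hext
end

section
/- Let k be an algebraically closed field and let E and K be field extensions of k. Then E ⊗_k K is an integral domain. -/
/-!
Over an algebraically closed field `k`, a maximal ideal of a finitely generated `k`-algebra `A` is
the kernel of a `k`-point `φ : A →ₐ[k] k` (Nullstellensatz). Expanding elements of `A ⊗[k] B` in a
`k`-basis of `B`, specialising at `φ` kills `x` exactly when all coordinates of `x` lie in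
`ker φ`. If `x * y = 0` and `B` is a domain, each specialisation kills `x` or `y`, so the product of
the coordinate ideals of `x` and `y` lies in every maximal ideal of `A`, hence in the Jacobson
radical of the reduced Jacobson ring `A`, which is zero; as `A` is a domain, one of the two
coordinate ideals vanishes. The general case reduces to this one, since every element of
`A ⊗[k] B` comes from `A ⊗[k] D` for a finitely generated subalgebra `D ⊆ B`, and
`A ⊗[k] D → A ⊗[k] B` is injective by flatness over a field.
-/

open scoped TensorProduct

theorem Subalgebra.baseChange_mono {R A B : Type*} [CommSemiring R] [Semiring A] [Algebra R A]
    [CommSemiring B] [Algebra R B] {C D : Subalgebra R A} (h : C ≤ D) :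
    C.baseChange B ≤ D.baseChange B := by
  have : Algebra.TensorProduct.map (AlgHom.id B B) C.val =
      (Algebra.TensorProduct.map (AlgHom.id B B) D.val).comp
        (Algebra.TensorProduct.map (AlgHom.id B B) (Subalgebra.inclusion h)) := by
    rw [← Algebra.TensorProduct.map_comp]; rfl
  rw [Subalgebra.baseChange, Subalgebra.baseChange, this]
  exact AlgHom.range_comp_le_range _ _

theorem exists_algHom_ker_eq_of_isMaximal {k A : Type*} [Field k] [IsAlgClosed k] [CommRing A]
    [Algebra k A] [Algebra.FiniteType k A] (m : Ideal A) [m.IsMaximal] :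
    ∃ φ : A →ₐ[k] k, RingHom.ker φ = m := by
  let := Ideal.Quotient.field m
  have : Module.Finite k (A ⧸ m) := finite_of_finite_type_of_isJacobsonRing k _
  refine ⟨(IsAlgClosed.lift : A ⧸ m →ₐ[k] k).comp (Ideal.Quotient.mkₐ k m), ?_⟩
  ext a
  simp [RingHom.mem_ker, Ideal.Quotient.eq_zero_iff_mem]

namespace Module.Basis

variable {k A B ι : Type*} [CommRing k] [CommRing A] [CommRing B] [Algebra k A] [Algebra k B]
  (b : Basis ι k B)

theorem repr_lid_map_baseChange (φ : A →ₐ[k] k) (z : A ⊗[k] B) (i : ι) :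
    b.repr (Algebra.TensorProduct.lid k B (Algebra.TensorProduct.map φ (AlgHom.id k B) z)) i =
      φ ((b.baseChange A).repr z i) := by
  induction z with
  | zero => simp
  | tmul a x => simp [baseChange_repr_tmul, mul_comm]
  | add u v hu hv => simp [hu, hv]

def coeffIdeal (z : A ⊗[k] B) : Ideal A :=
  Ideal.span (Set.range ((b.baseChange A).repr z))

theorem coeffIdeal_eq_bot_iff {z : A ⊗[k] B} : b.coeffIdeal z = ⊥ ↔ z = 0 := by
  rw [coeffIdeal, Ideal.span_eq_bot, Set.forall_mem_range, ← (b.baseChange A).repr.map_eq_zero_iff,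
    Finsupp.ext_iff]
  rfl

theorem coeffIdeal_le_ker {φ : A →ₐ[k] k} {z : A ⊗[k] B}
    (hz : Algebra.TensorProduct.lid k B (Algebra.TensorProduct.map φ (AlgHom.id k B) z) = 0) :
    b.coeffIdeal z ≤ RingHom.ker φ := by
  rw [coeffIdeal, Ideal.span_le]
  rintro _ ⟨i, rfl⟩
  simp [RingHom.mem_ker, ← repr_lid_map_baseChange, hz]

end Module.Basis

namespace Algebra.TensorProduct

theorem noZeroDivisors_of_forall_fg {R A B : Type*} [CommRing R]
    [CommRing A] [Semiring B] [Algebra R A] [Algebra R B] [Module.Flat R A]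
    (h : ∀ D : Subalgebra R B, D.FG → NoZeroDivisors (A ⊗[R] D)) :
    NoZeroDivisors (A ⊗[R] B) := by
  refine ⟨fun {x y} hxy => ?_⟩
  obtain ⟨C, hC, hx⟩ := exists_fg_and_mem_baseChange x
  obtain ⟨C', hC', hy⟩ := exists_fg_and_mem_baseChange y
  set f := map (AlgHom.id A A) (C ⊔ C').val
  obtain ⟨x, rfl⟩ := Subalgebra.baseChange_mono (le_sup_left : C ≤ C ⊔ C') hx
  obtain ⟨y, rfl⟩ := Subalgebra.baseChange_mono (le_sup_right : C' ≤ C ⊔ C') hy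
  have hf : Function.Injective f :=
    Module.Flat.lTensor_preserves_injective_linearMap _ Subtype.val_injective
  have := h _ (hC.sup hC')
  rw [← map_mul, ← map_zero f] at hxy
  rcases mul_eq_zero.mp (hf hxy) with rfl | rfl <;> simp

variable {k A B : Type*} [Field k] [IsAlgClosed k] [CommRing A] [CommRing B] [Algebra k A]
  [Algebra k B] [IsDomain A] [IsDomain B]

theorem noZeroDivisors_of_finiteType [Algebra.FiniteType k A] : NoZeroDivisors (A ⊗[k] B) := by
  refine ⟨fun {x y} hxy => ?_⟩
  let b := Module.Basis.ofVectorSpace k B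
  have hle : ∀ m : Ideal A, m.IsMaximal → b.coeffIdeal x * b.coeffIdeal y ≤ m := by
    intro m hm
    obtain ⟨φ, rfl⟩ := exists_algHom_ker_eq_of_isMaximal (k := k) m
    let ev := (Algebra.TensorProduct.lid k B).toAlgHom.comp (map φ (AlgHom.id k B))
    rcases mul_eq_zero.mp (show ev x * ev y = 0 by rw [← map_mul, hxy, map_zero]) with h | h
    · exact Ideal.mul_le_left.trans (b.coeffIdeal_le_ker h)
    · exact Ideal.mul_le_right.trans (b.coeffIdeal_le_ker h)
  have : IsJacobsonRing A := isJacobsonRing_of_finiteType (A := k)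
  have hbot : b.coeffIdeal x * b.coeffIdeal y = ⊥ := by
    rw [← le_bot_iff, ← Ideal.radical_bot_of_isReduced, Ideal.radical_eq_jacobson]
    exact le_sInf fun m hm => hle m hm.2
  simpa only [Ideal.mul_eq_bot, Module.Basis.coeffIdeal_eq_bot_iff] using hbot

theorem isDomain_of_isAlgClosed : IsDomain (A ⊗[k] B) := by
  have : NoZeroDivisors (A ⊗[k] B) := noZeroDivisors_of_forall_fg fun D hD => by
    have : Algebra.FiniteType k D := (Subalgebra.fg_iff_finiteType D).mp hD
    have : NoZeroDivisors (D ⊗[k] A) := noZeroDivisors_of_finiteType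
    exact (Algebra.TensorProduct.comm k A D).toMulEquiv.noZeroDivisors
  exact NoZeroDivisors.to_isDomain _

end Algebra.TensorProduct

/-- If `k` is algebraically closed and `E`, `K` are field extensions of `k`,
then `E ⊗ₖ K` is an integral domain. -/
theorem stmt_8 {k E K : Type*} [Field k] [IsAlgClosed k]
    [Field E] [Field K] [Algebra k E] [Algebra k K] :
    IsDomain (E ⊗[k] K) :=
  Algebra.TensorProduct.isDomain_of_isAlgClosed
end

section
/- Let S be a commutative ring with derivation ∂ over a field k of characteristic zero such that S is ∂-simple with ring of constants exactly k, and let K/k be a field extension. Then S ⊗_k K, with derivation ∂ ⊗ id (trivial derivation on K), is ∂-simple. -/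
/-!
A `k`-basis of `K` makes `S ⊗ₖ K` a free `S`-module on which `D'` acts coordinatewise. Take a
nonzero `x` of minimal support in a nonzero stable ideal `I`, and `j₀` in its support. The
`j₀`-coordinates of the elements of `I` supported in `supp x` form a nonzero `D`-stable ideal
of `S`, so some `y` among those elements has coordinate `1` at `j₀`. Since `D 1 = 0`, the support
of `D' y` misses `j₀`, so `D' y = 0` by minimality. The coordinates of `y` are then constants,
i.e. lie in `k`, so `y = 1 ⊗ u` with `u ≠ 0`, a unit.
-/

open scoped TensorProduct

namespace Derivation

variable {R S ι : Type*} [CommSemiring R] [CommSemiring S] [Algebra R S] (D : Derivation R S S)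

theorem mapRange_mem_supported {T : Set ι} {v : ι →₀ S} (hv : v ∈ Finsupp.supported S S T) :
    v.mapRange D (map_zero D) ∈ Finsupp.supported S S T :=
  (Finsupp.mem_supported _ _).2 <| (Finset.coe_subset.2 Finsupp.support_mapRange).trans
    ((Finsupp.mem_supported _ _).1 hv)

theorem exists_ne_zero_mapRange_eq_zero
    (hsimple : ∀ I : Ideal S, (∀ a ∈ I, D a ∈ I) → I = ⊥ ∨ I = ⊤)
    {N : Submodule S (ι →₀ S)} (hN : ∀ v ∈ N, v.mapRange D (map_zero D) ∈ N)
    (hN0 : N ≠ ⊥) :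
    ∃ v ∈ N, v ≠ 0 ∧ v.mapRange D (map_zero D) = 0 := by
  classical
  obtain ⟨x, ⟨hxN, hx0⟩, hmin⟩ := (measure fun v : ι →₀ S => v.support.card).wf.has_min
    {v | v ∈ N ∧ v ≠ 0} (Submodule.exists_mem_ne_zero_of_ne_bot hN0)
  obtain ⟨j₀, hj₀⟩ := Finsupp.support_nonempty_iff.2 hx0
  let T : Set ι := x.support
  let J : Ideal S := (N ⊓ Finsupp.supported S S T).map (Finsupp.lapply j₀)
  have hJ : ∀ a ∈ J, D a ∈ J := by
    rintro _ ⟨v, ⟨hvN, hvT⟩, rfl⟩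
    exact ⟨_, ⟨hN v hvN, D.mapRange_mem_supported hvT⟩, by simp⟩
  have hxJ : x j₀ ∈ J := ⟨x, ⟨hxN, (Finsupp.mem_supported _ _).2 le_rfl⟩, rfl⟩
  have hJ0 : J ≠ ⊥ :=
    (Submodule.ne_bot_iff J).2 ⟨x j₀, hxJ, Finsupp.mem_support_iff.1 hj₀⟩
  obtain ⟨y, ⟨hyN, hyT⟩, hy1⟩ : (1 : S) ∈ J :=
    (hsimple J hJ).resolve_left hJ0 ▸ Submodule.mem_top
  simp only [Finsupp.lapply_apply] at hy1
  have : Nontrivial S := nontrivial_of_ne _ _ (Finsupp.mem_support_iff.1 hj₀)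
  refine ⟨y, hyN, fun h => by simp [h] at hy1, ?_⟩
  have hsupp : (y.mapRange D (map_zero D)).support ⊆ x.support.erase j₀ := by
    intro j hj
    rw [Finsupp.mem_support_iff, Finsupp.mapRange_apply] at hj
    refine Finset.mem_erase.2 ⟨fun h => hj ?_, ?_⟩
    · rw [h, hy1, D.map_one_eq_zero]
    · refine (Finsupp.mem_supported _ _).1 hyT (Finsupp.mem_support_iff.2 fun h => hj ?_)
      rw [h, map_zero]
  by_contra hDy
  exact hmin _ ⟨hN y hyN, hDy⟩ <|
    (Finset.card_le_card hsupp).trans_lt (Finset.card_erase_lt_of_mem hj₀)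

end Derivation

namespace Algebra.TensorProduct

variable {k S M ι : Type*} [CommSemiring k] [Semiring S] [Algebra k S] [AddCommMonoid M]
  [Module k M] (b : Module.Basis ι k M)

theorem basis_repr_rTensor (f : S →ₗ[k] S) (x : S ⊗[k] M) :
    (basis S b).repr (f.rTensor M x) = ((basis S b).repr x).mapRange f (map_zero f) := by
  induction x using TensorProduct.induction_on with
  | zero => simp
  | tmul s m =>
    ext j
    simp [← Algebra.commutes, ← Algebra.smul_def]
  | add x y hx hy =>
    ext j
    simp only [map_add, hx, hy, Finsupp.add_apply, Finsupp.mapRange_apply]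

theorem exists_one_tmul_eq_of_basis_repr_mem_range {x : S ⊗[k] M}
    (h : ∀ j, (basis S b).repr x j ∈ Set.range (algebraMap k S)) :
    ∃ m : M, (1 : S) ⊗ₜ[k] m = x := by
  choose γ hγ using h
  change x ∈ LinearMap.range (TensorProduct.mk k S M 1)
  rw [← (basis S b).linearCombination_repr x, Finsupp.linearCombination_apply]
  refine Submodule.sum_mem _ fun j _ => ⟨γ j • b j, ?_⟩
  dsimp only
  rw [← hγ j, basis_repr_symm_apply', Algebra.algebraMap_eq_smul_one, TensorProduct.mk_apply,
    TensorProduct.smul_tmul]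

end Algebra.TensorProduct

theorem stmt_9_general {k S K : Type*} [Field k] [CommRing S]
    [Algebra k S] [Field K] [Algebra k K]
    (D : Derivation k S S)
    (hsimple : ∀ I : Ideal S, (∀ a ∈ I, D a ∈ I) → I = ⊥ ∨ I = ⊤)
    (hconst : ∀ a : S, D a = 0 → ∃ c : k, algebraMap k S c = a)
    (D' : Derivation k (S ⊗[k] K) (S ⊗[k] K))
    (hD' : ∀ (s : S) (c : K), D' (s ⊗ₜ[k] c) = (D s) ⊗ₜ[k] c) :
    ∀ I : Ideal (S ⊗[k] K), (∀ a ∈ I, D' a ∈ I) → I = ⊥ ∨ I = ⊤ := by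
  intro I hI
  refine or_iff_not_imp_left.2 fun hI0 => ?_
  have hD'_eq : (D' : S ⊗[k] K →ₗ[k] S ⊗[k] K) = D.toLinearMap.rTensor K :=
    TensorProduct.ext' hD'
  let B := Algebra.TensorProduct.basis S (Module.Basis.ofVectorSpace k K)
  have hB : ∀ x, B.repr (D' x) = (B.repr x).mapRange D (map_zero D) := fun x => by
    rw [← Derivation.coeFn_coe, hD'_eq, Algebra.TensorProduct.basis_repr_rTensor]
    rfl
  let N : Submodule S (_ →₀ S) := (I.restrictScalars S).map B.repr.toLinearMap
  have hN : ∀ v ∈ N, v.mapRange D (map_zero D) ∈ N := by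
    rintro _ ⟨x, hx, rfl⟩
    exact ⟨D' x, hI x hx, hB x⟩
  have hN0 : N ≠ ⊥ := by
    obtain ⟨x, hx, hx0⟩ := Submodule.exists_mem_ne_zero_of_ne_bot hI0
    exact (Submodule.ne_bot_iff N).2 ⟨B.repr x, ⟨x, hx, rfl⟩, by simpa using hx0⟩
  obtain ⟨_, ⟨y, hyI, rfl⟩, hy0, hDy⟩ := D.exists_ne_zero_mapRange_eq_zero hsimple hN hN0
  obtain ⟨u, rfl⟩ := Algebra.TensorProduct.exists_one_tmul_eq_of_basis_repr_mem_range
    (Module.Basis.ofVectorSpace k K) (x := y) fun j => hconst _ (by simpa using congr($hDy j))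
  have hu : u ≠ 0 := by rintro rfl; simp at hy0
  exact I.eq_top_of_isUnit_mem hyI
    ((isUnit_iff_ne_zero.2 hu).map Algebra.TensorProduct.includeRight)

/-- If `S` is a `∂`-simple differential ring over a field `k` of characteristic zero, with
constants exactly `k`, and `K/k` is a field extension, then `S ⊗ₖ K` with the derivation
`D ⊗ id` is again `∂`-simple. -/
theorem stmt_9 {k S K : Type*} [Field k] [CharZero k] [CommRing S] [Nontrivial S]
    [Algebra k S] [Field K] [Algebra k K]
    (D : Derivation k S S)
    (hsimple : ∀ I : Ideal S, (∀ a ∈ I, D a ∈ I) → I = ⊥ ∨ I = ⊤)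
    (hconst : ∀ a : S, D a = 0 → ∃ c : k, algebraMap k S c = a)
    (D' : Derivation k (S ⊗[k] K) (S ⊗[k] K))
    (hD' : ∀ (s : S) (c : K), D' (s ⊗ₜ[k] c) = (D s) ⊗ₜ[k] c) :
    ∀ I : Ideal (S ⊗[k] K), (∀ a ∈ I, D' a ∈ I) → I = ⊥ ∨ I = ⊤ :=
  stmt_9_general D hsimple hconst D' hD'
end

section
/- Let K be a field and A a commutative Hopf algebra over K. Then every finite subset of A is contained in a Hopf subalgebra of A that is finitely generated as a K-algebra. Consequently, A is the directed union of its finitely generated Hopf subalgebras. -/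
/-!
Fundamental theorem of coalgebras: for a finite subset `s` of a coalgebra `C` over a field, let
`V` be the span of the elements `leftContract φ (rightContract ψ a) = (φ ⊗ id ⊗ ψ) (Δ² a)` for
`a ∈ s` and functionals `φ, ψ`. It is finite-dimensional, contains `s` (take `φ = ψ = ε`), and
by coassociativity it is stable under both one-sided contractions `(χ ⊗ id) ∘ Δ` and
`(id ⊗ χ) ∘ Δ`. Over a field, a tensor whose left and right contractions all lie in `V` lies in
`V ⊗ V`, so `V` is a subcoalgebra.

For a commutative Hopf algebra, `Δ ∘ S = (S ⊗ S) ∘ τ ∘ Δ` and `S ∘ S = id`, so `V + S(V)` is a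
subcoalgebra stable under `S`. As `Δ` and `S` are algebra maps, the subalgebra generated by
`V + S(V)` is a Hopf subalgebra, finitely generated because `V + S(V)` is finite-dimensional.
-/

open scoped TensorProduct
open Coalgebra TensorProduct WithConv

namespace TensorProduct

lemma range_map_subtype_mono {R M N : Type*} [CommSemiring R] [AddCommMonoid M] [Module R M]
    [AddCommMonoid N] [Module R N] {V V' : Submodule R M} {W W' : Submodule R N} (hV : V ≤ V')
    (hW : W ≤ W') :
    LinearMap.range (map V.subtype W.subtype) ≤ LinearMap.range (map V'.subtype W'.subtype) := by
  rw [← Submodule.subtype_comp_inclusion V V' hV, ← Submodule.subtype_comp_inclusion W W' hW,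
    map_comp]
  exact LinearMap.range_comp_le_range _ _

section Free
variable {R M N : Type*} [CommRing R] [AddCommGroup M] [Module R M] [AddCommGroup N] [Module R N]

/- The coordinates of `t` in a basis of `M` are contractions `lid (χ.rTensor N t)`. -/
lemma lTensor_apply_eq_self_of_forall [Module.Free R M] {t : M ⊗[R] N} {W : Submodule R N}
    (ht : ∀ χ : M →ₗ[R] R, TensorProduct.lid R N (χ.rTensor N t) ∈ W) {p : N →ₗ[R] N}
    (hp : ∀ w ∈ W, p w = w) : p.lTensor M t = t := by
  classical
  have key (χ : M →ₗ[R] R) (u : M ⊗[R] N) : TensorProduct.lid R N (χ.rTensor N (p.lTensor M u)) =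
      p (TensorProduct.lid R N (χ.rTensor N u)) := by
    induction u using TensorProduct.induction_on <;> simp_all
  rw [← sub_eq_zero]
  apply (equivFinsuppOfBasisLeft (Module.Free.chooseBasis R M)).injective
  ext i
  simp [equivFinsuppOfBasisLeft_apply, key, hp _ (ht _)]

lemma rTensor_apply_eq_self_of_forall [Module.Free R N] {t : M ⊗[R] N} {V : Submodule R M}
    (ht : ∀ χ : N →ₗ[R] R, TensorProduct.rid R M (χ.lTensor M t) ∈ V) {p : M →ₗ[R] M}
    (hp : ∀ v ∈ V, p v = v) : p.rTensor N t = t := by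
  classical
  have key (χ : N →ₗ[R] R) (u : M ⊗[R] N) : TensorProduct.rid R M (χ.lTensor M (p.rTensor N u)) =
      p (TensorProduct.rid R M (χ.lTensor M u)) := by
    induction u using TensorProduct.induction_on <;> simp_all
  rw [← sub_eq_zero]
  apply (equivFinsuppOfBasisRight (Module.Free.chooseBasis R N)).injective
  ext i
  simp [equivFinsuppOfBasisRight_apply, key, hp _ (ht _)]

end Free

lemma mem_range_map_subtype_of_forall {K M N : Type*} [Field K] [AddCommGroup M] [Module K M]
    [AddCommGroup N] [Module K N] {t : M ⊗[K] N} {V : Submodule K M} {W : Submodule K N}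
    (hV : ∀ χ : N →ₗ[K] K, TensorProduct.rid K M (χ.lTensor M t) ∈ V)
    (hW : ∀ χ : M →ₗ[K] K, TensorProduct.lid K N (χ.rTensor N t) ∈ W) :
    t ∈ LinearMap.range (map V.subtype W.subtype) := by
  obtain ⟨gV, hgV⟩ := V.subtype.exists_leftInverse_of_injective V.ker_subtype
  obtain ⟨gW, hgW⟩ := W.subtype.exists_leftInverse_of_injective W.ker_subtype
  have hpV (v : M) (hv : v ∈ V) : V.subtype (gV v) = v :=
    congrArg V.subtype (LinearMap.congr_fun hgV ⟨v, hv⟩)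
  have hpW (w : N) (hw : w ∈ W) : W.subtype (gW w) = w :=
    congrArg W.subtype (LinearMap.congr_fun hgW ⟨w, hw⟩)
  refine ⟨map gV gW t, ?_⟩
  rw [← LinearMap.comp_apply, ← map_comp, ← LinearMap.lTensor_comp_rTensor, LinearMap.comp_apply,
    rTensor_apply_eq_self_of_forall hV hpV, lTensor_apply_eq_self_of_forall hW hpW]

end TensorProduct

namespace Coalgebra

section CommSemiring
variable {R C : Type*} [CommSemiring R] [AddCommMonoid C] [Module R C] [Coalgebra R C]

noncomputable def leftContract (φ : C →ₗ[R] R) : C →ₗ[R] C :=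
  (_root_.TensorProduct.lid R C).toLinearMap ∘ₗ φ.rTensor C ∘ₗ comul

noncomputable def rightContract (φ : C →ₗ[R] R) : C →ₗ[R] C :=
  (_root_.TensorProduct.rid R C).toLinearMap ∘ₗ φ.lTensor C ∘ₗ comul

lemma Repr.leftContract_eq {ι : Type*} {x : C} (r : Repr R x ι) (φ : C →ₗ[R] R) :
    leftContract φ x = ∑ i ∈ r.index, φ (r.left i) • r.right i := by
  simp [leftContract, ← r.eq]

lemma Repr.rightContract_eq {ι : Type*} {x : C} (r : Repr R x ι) (φ : C →ₗ[R] R) :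
    rightContract φ x = ∑ i ∈ r.index, φ (r.right i) • r.left i := by
  simp [rightContract, ← r.eq]

@[simp] lemma leftContract_counit (x : C) : leftContract (counit (R := R)) x = x := by
  simp [leftContract]

@[simp] lemma rightContract_counit (x : C) : rightContract (counit (R := R)) x = x := by
  simp [rightContract]

lemma leftContract_leftContract (φ χ : C →ₗ[R] R) (x : C) :
    leftContract φ (leftContract χ x) = leftContract (toConv χ * toConv φ).ofConv x := by
  set r := ℛ R x
  have h := congrArg ((_root_.TensorProduct.lid R C).toLinearMap ∘ₗ χ.rTensor C ∘ₗ
      ((_root_.TensorProduct.lid R C).toLinearMap ∘ₗ φ.rTensor C).lTensor C)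
    (sum_tmul_tmul_eq r (fun i ↦ ℛ R (r.left i)) (fun i ↦ ℛ R (r.right i)))
  simp only [map_sum, LinearMap.comp_apply, LinearMap.lTensor_tmul, LinearMap.rTensor_tmul,
    LinearEquiv.coe_coe, _root_.TensorProduct.lid_tmul] at h
  rw [r.leftContract_eq, r.leftContract_eq, map_sum]
  convert h.symm using 2 with i
  · rw [map_smul, (ℛ R _).leftContract_eq, Finset.smul_sum]
  · rw [(ℛ R _).convMul_apply, Finset.sum_smul]
    simp only [mul_smul]

lemma rightContract_rightContract (φ χ : C →ₗ[R] R) (x : C) :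
    rightContract φ (rightContract χ x) = rightContract (toConv φ * toConv χ).ofConv x := by
  set r := ℛ R x
  have h := congrArg ((_root_.TensorProduct.rid R C).toLinearMap ∘ₗ
      (LinearMap.mul' R R ∘ₗ map φ χ).lTensor C)
    (sum_tmul_tmul_eq r (fun i ↦ ℛ R (r.left i)) (fun i ↦ ℛ R (r.right i)))
  simp only [map_sum, LinearMap.comp_apply, LinearMap.lTensor_tmul, _root_.TensorProduct.map_tmul,
    LinearMap.mul'_apply, LinearEquiv.coe_coe, _root_.TensorProduct.rid_tmul] at h
  rw [r.rightContract_eq, r.rightContract_eq, map_sum]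
  convert h using 2 with i
  · rw [map_smul, (ℛ R _).rightContract_eq, Finset.smul_sum]
    simp only [smul_smul, mul_comm]
  · rw [(ℛ R _).convMul_apply, Finset.sum_smul]

lemma leftContract_rightContract_comm (φ ψ : C →ₗ[R] R) (x : C) :
    leftContract φ (rightContract ψ x) = rightContract ψ (leftContract φ x) := by
  set r := ℛ R x
  have h := congrArg ((_root_.TensorProduct.lid R C).toLinearMap ∘ₗ φ.rTensor C ∘ₗ
      ((_root_.TensorProduct.rid R C).toLinearMap ∘ₗ ψ.lTensor C).lTensor C)
    (sum_tmul_tmul_eq r (fun i ↦ ℛ R (r.left i)) (fun i ↦ ℛ R (r.right i)))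
  simp only [map_sum, LinearMap.comp_apply, LinearMap.lTensor_tmul, LinearMap.rTensor_tmul,
    LinearEquiv.coe_coe, _root_.TensorProduct.lid_tmul, _root_.TensorProduct.rid_tmul] at h
  rw [r.rightContract_eq, r.leftContract_eq, map_sum, map_sum]
  convert h using 2 with i
  · rw [map_smul, (ℛ R _).leftContract_eq, Finset.smul_sum]
    simp only [smul_comm (ψ _)]
  · rw [map_smul, (ℛ R _).rightContract_eq, Finset.smul_sum]

def IsSubcoalgebra (V : Submodule R C) : Prop :=
  ∀ x ∈ V, comul x ∈ LinearMap.range (map V.subtype V.subtype)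

lemma IsSubcoalgebra.sup {V W : Submodule R C} (hV : IsSubcoalgebra V) (hW : IsSubcoalgebra W) :
    IsSubcoalgebra (V ⊔ W) := by
  intro x hx
  obtain ⟨v, hv, w, hw, rfl⟩ := Submodule.mem_sup.1 hx
  rw [map_add]
  exact add_mem (range_map_subtype_mono le_sup_left le_sup_left (hV v hv))
    (range_map_subtype_mono le_sup_right le_sup_right (hW w hw))

variable (R) in
def coeffSpace (s : Set C) : Submodule R C :=
  Submodule.span R {y | ∃ a ∈ s, ∃ φ ψ : C →ₗ[R] R, leftContract φ (rightContract ψ a) = y}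

lemma subset_coeffSpace (s : Set C) : s ⊆ coeffSpace R s := fun a ha ↦
  Submodule.subset_span ⟨a, ha, counit, counit, by simp⟩

lemma leftContract_mem_coeffSpace {s : Set C} (χ : C →ₗ[R] R) {x : C} (hx : x ∈ coeffSpace R s) :
    leftContract χ x ∈ coeffSpace R s := by
  refine (Submodule.span_le (p := (coeffSpace R s).comap (leftContract χ))).2 ?_ hx
  rintro _ ⟨a, ha, φ, ψ, rfl⟩
  exact Submodule.subset_span ⟨a, ha, _, ψ, (leftContract_leftContract χ φ _).symm⟩

lemma rightContract_mem_coeffSpace {s : Set C} (χ : C →ₗ[R] R) {x : C} (hx : x ∈ coeffSpace R s) :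
    rightContract χ x ∈ coeffSpace R s := by
  refine (Submodule.span_le (p := (coeffSpace R s).comap (rightContract χ))).2 ?_ hx
  rintro _ ⟨a, ha, φ, ψ, rfl⟩
  refine Submodule.subset_span ⟨a, ha, φ, (toConv χ * toConv ψ).ofConv, ?_⟩
  rw [← rightContract_rightContract, leftContract_rightContract_comm]

lemma Repr.leftContract_mem_span {ι : Type*} {x : C} (r : Repr R x ι) (φ : C →ₗ[R] R) :
    leftContract φ x ∈ Submodule.span R (r.right '' r.index) := by
  rw [r.leftContract_eq]
  exact sum_mem fun i hi ↦ Submodule.smul_mem _ _ (Submodule.subset_span ⟨i, hi, rfl⟩)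

end CommSemiring

section Noetherian
variable {R C : Type*} [CommRing R] [IsNoetherianRing R] [AddCommGroup C] [Module R C]
  [Coalgebra R C]

lemma coeffSpace_fg {s : Set C} (hs : s.Finite) : (coeffSpace R s).FG := by
  let T : Set C := ⋃ a ∈ s, ⋃ i ∈ (ℛ R a).index,
    (ℛ R ((ℛ R a).left i)).right '' (ℛ R ((ℛ R a).left i)).index
  have hT : T.Finite := hs.biUnion fun a _ ↦ (ℛ R a).index.finite_toSet.biUnion fun i _ ↦
    (Finset.finite_toSet _).image _
  refine (Submodule.fg_span hT).of_le (Submodule.span_le.2 ?_)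
  rintro _ ⟨a, ha, φ, ψ, rfl⟩
  rw [(ℛ R a).rightContract_eq, map_sum]
  refine sum_mem fun i hi ↦ ?_
  rw [map_smul]
  refine Submodule.smul_mem _ _ (Submodule.span_mono ?_ ((ℛ R _).leftContract_mem_span φ))
  exact fun y hy ↦ Set.mem_iUnion₂.2 ⟨a, ha, Set.mem_iUnion₂.2 ⟨i, hi, hy⟩⟩

end Noetherian

section Field
variable {K C : Type*} [Field K] [AddCommGroup C] [Module K C] [Coalgebra K C]

lemma isSubcoalgebra_coeffSpace (s : Set C) : IsSubcoalgebra (coeffSpace K s) :=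
  fun _ hx ↦ mem_range_map_subtype_of_forall (fun χ ↦ rightContract_mem_coeffSpace χ hx)
    (fun χ ↦ leftContract_mem_coeffSpace χ hx)

theorem exists_fg_isSubcoalgebra {s : Set C} (hs : s.Finite) :
    ∃ V : Submodule K C, V.FG ∧ s ⊆ V ∧ IsSubcoalgebra V :=
  ⟨coeffSpace K s, coeffSpace_fg hs, subset_coeffSpace s, isSubcoalgebra_coeffSpace s⟩

end Field

end Coalgebra

namespace HopfAlgebra

variable {R A : Type*} [CommSemiring R]

section Semiring
variable [Semiring A] [HopfAlgebra R A]

local notation "inl" =>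
  AlgHom.toLinearMap (Algebra.TensorProduct.includeLeft (S := R) : A →ₐ[R] A ⊗[R] A)
local notation "inr" =>
  AlgHom.toLinearMap (Algebra.TensorProduct.includeRight : A →ₐ[R] A ⊗[R] A)

lemma toConv_comul_eq_includeLeft_mul_includeRight :
    toConv (comul (R := R) (A := A)) = toConv inl * toConv inr := by
  have : LinearMap.mul' R (A ⊗[R] A) ∘ₗ map inl inr = .id := by
    ext; simp
  rw [LinearMap.convMul_def, ofConv_toConv, ofConv_toConv, ← LinearMap.comp_assoc, this,
    LinearMap.id_comp]

lemma toConv_map_antipode_comm_comul_eq_includeRight_mul_includeLeft :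
    toConv (map (antipode R) (antipode R) ∘ₗ (TensorProduct.comm R A A).toLinearMap ∘ₗ comul) =
      toConv (inr ∘ₗ antipode R) * toConv (inl ∘ₗ antipode R) := by
  have : LinearMap.mul' R (A ⊗[R] A) ∘ₗ map (inr ∘ₗ antipode R) (inl ∘ₗ antipode R) =
      map (antipode R) (antipode R) ∘ₗ (TensorProduct.comm R A A).toLinearMap := by
    ext; simp
  rw [LinearMap.convMul_def, ofConv_toConv, ofConv_toConv, ← LinearMap.comp_assoc, ← this,
    LinearMap.comp_assoc]

lemma algHom_comp_antipode_mul_algHom {B : Type*} [Semiring B] [Algebra R B] (h : A →ₐ[R] B) :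
    toConv (h.toLinearMap ∘ₗ antipode R) * toConv h.toLinearMap = 1 := by
  apply WithConv.ofConv_injective
  calc _ = (toConv (h.toLinearMap ∘ₗ antipode R) *
        toConv (h.toLinearMap ∘ₗ LinearMap.id)).ofConv := rfl
    _ = h.toLinearMap ∘ₗ (toConv (antipode R) * toConv (LinearMap.id : A →ₗ[R] A)).ofConv :=
      (LinearMap.algHom_comp_convMul_distrib ..).symm
    _ = _ := by rw [LinearMap.antipode_mul_id]; ext; simp

/- With `inl a = a ⊗ 1` and `inr a = 1 ⊗ a`, the product `(inr ∘ S) * (inl ∘ S) * inl * inr`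
collapses from the middle, as `(h ∘ S) * h = 1` for every algebra map `h`. -/
lemma comul_left_inv :
    toConv (map (antipode R) (antipode R) ∘ₗ (TensorProduct.comm R A A).toLinearMap ∘ₗ comul) *
      toConv (comul (R := R) (A := A)) = 1 := by
  rw [toConv_map_antipode_comm_comul_eq_includeRight_mul_includeLeft,
    toConv_comul_eq_includeLeft_mul_includeRight, mul_assoc, ← mul_assoc (toConv (inl ∘ₗ _)),
    algHom_comp_antipode_mul_algHom, one_mul, algHom_comp_antipode_mul_algHom]

theorem comul_comp_antipode :
    comul ∘ₗ antipode R =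
      map (antipode R) (antipode R) ∘ₗ (TensorProduct.comm R A A).toLinearMap ∘ₗ comul (A := A) :=
  congrArg ofConv (left_inv_eq_right_inv comul_left_inv LinearMap.comul_right_inv).symm

end Semiring

section CommSemiring
variable [CommSemiring A] [HopfAlgebra R A]

theorem antipode_comp_antipode : antipode R ∘ₗ antipode R = (.id : A →ₗ[R] A) := by
  have h := algHom_comp_antipode_mul_algHom (antipodeAlgHom R A)
  rw [toLinearMap_antipodeAlgHom] at h
  exact congrArg ofConv (left_inv_eq_right_inv h LinearMap.antipode_mul_id)

end CommSemiring
end HopfAlgebra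

namespace Coalgebra.IsSubcoalgebra

variable {R A : Type*} [CommSemiring R]

lemma map_antipode [Semiring A] [HopfAlgebra R A] {V : Submodule R A} (hV : IsSubcoalgebra V) :
    IsSubcoalgebra (V.map (HopfAlgebra.antipode R)) := by
  rintro _ ⟨x, hx, rfl⟩
  obtain ⟨z, hz⟩ := hV x hx
  let SV := V.map (HopfAlgebra.antipode R)
  let g := (HopfAlgebra.antipode R).submoduleMap V
  have hg : map SV.subtype SV.subtype ∘ₗ map g g ∘ₗ (TensorProduct.comm R V V).toLinearMap =
      map (HopfAlgebra.antipode R) (HopfAlgebra.antipode R) ∘ₗ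
        (TensorProduct.comm R A A).toLinearMap ∘ₗ map V.subtype V.subtype := by
    ext; rfl
  refine ⟨map g g (TensorProduct.comm R V V z), ?_⟩
  have := congr($hg z)
  simp only [LinearMap.comp_apply, LinearEquiv.coe_coe] at this
  rw [this, hz, ← LinearMap.comp_apply comul, HopfAlgebra.comul_comp_antipode]
  rfl

lemma adjoin [Semiring A] [Bialgebra R A] {V : Submodule R A} (hV : IsSubcoalgebra V) :
    IsSubcoalgebra (Subalgebra.toSubmodule (Algebra.adjoin R (V : Set A))) := by
  set B := Algebra.adjoin R (V : Set A)
  have hVB : V ≤ Subalgebra.toSubmodule B := Algebra.subset_adjoin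
  have hB : B ≤ (Algebra.TensorProduct.map B.val B.val).range.comap (Bialgebra.comulAlgHom R A) :=
    Algebra.adjoin_le fun v hv ↦ range_map_subtype_mono hVB hVB (hV v hv)
  exact fun b hb ↦ hB hb

end Coalgebra.IsSubcoalgebra

namespace HopfAlgebra

variable {R A : Type*} [CommSemiring R] [CommSemiring A] [HopfAlgebra R A]

lemma map_antipode_sup_map_antipode (V : Submodule R A) :
    (V ⊔ V.map (antipode R)).map (antipode R) = V ⊔ V.map (antipode R) := by
  rw [Submodule.map_sup, ← Submodule.map_comp, antipode_comp_antipode, Submodule.map_id, sup_comm]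

lemma antipode_mem_adjoin {W : Submodule R A} (hW : W.map (antipode R) ≤ W) {b : A}
    (hb : b ∈ Algebra.adjoin R (W : Set A)) : antipode R b ∈ Algebra.adjoin R (W : Set A) := by
  have : (Algebra.adjoin R (W : Set A)).map (antipodeAlgHom R A) ≤
      Algebra.adjoin R (W : Set A) := by
    rw [AlgHom.map_adjoin]
    refine Algebra.adjoin_mono ?_
    rintro _ ⟨w, hw, rfl⟩
    exact hW ⟨w, hw, rfl⟩
  exact this ⟨b, hb, rfl⟩

end HopfAlgebra

/-- Every finite subset of a commutative Hopf algebra `A` over a field `K` is contained in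
a Hopf subalgebra of `A` that is finitely generated as a `K`-algebra (a subalgebra `B`
with `Δ(B) ⊆ B ⊗ B` and `S(B) ⊆ B`). -/
theorem stmt_14 {K A : Type*} [Field K] [CommRing A] [HopfAlgebra K A]
    (s : Finset A) :
    ∃ B : Subalgebra K A, B.FG ∧ (↑s : Set A) ⊆ B ∧
      (∀ b ∈ B, Coalgebra.comul (R := K) b ∈
        LinearMap.range (TensorProduct.map B.val.toLinearMap B.val.toLinearMap)) ∧
      (∀ b ∈ B, HopfAlgebra.antipode (R := K) b ∈ B) := by
  obtain ⟨V, hVfg, hsV, hV⟩ := Coalgebra.exists_fg_isSubcoalgebra (K := K) s.finite_toSet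
  set W := V ⊔ V.map (HopfAlgebra.antipode K)
  obtain ⟨t, ht⟩ : W.FG := hVfg.sup (hVfg.map _)
  refine ⟨Algebra.adjoin K (W : Set A), ⟨t, by rw [← ht, Algebra.adjoin_span]⟩,
    fun a ha ↦ Algebra.subset_adjoin (Submodule.mem_sup_left (hsV ha)),
    (hV.sup hV.map_antipode).adjoin,
    fun _ ↦ HopfAlgebra.antipode_mem_adjoin (HopfAlgebra.map_antipode_sup_map_antipode V).le⟩
end
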